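/- arXiv:2510.14785 — 6 statements merged into one kernel-verified Lean document; each statement's English description precedes it below -/
import Mathlib

section
/- If x* is a locally weakly efficient point of the multiobjective problem of minimizing F over S, then there is no tangent direction d to S at x* with JF(x*)d < 0 (componentwise strictly negative). -/
open Filter Topology

/-- If x* is locally weakly efficient for minimizing F over S, then no tangent
direction d to S at x* satisfies JF(x*) d < 0 componentwise. -/
theorem stmt0 (n r : ℕ) (S : Set (Fin n → ℝ)) (F : (Fin n → ℝ) → (Fin r → ℝ))
    (JF : Matrix (Fin r) (Fin n) ℝ) (xs : Fin n → ℝ) (hxs : xs ∈ S)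
    (hF : HasFDerivAt F (LinearMap.toContinuousLinearMap (Matrix.mulVecLin JF)) xs)
    (hweak : ∃ N ∈ 𝓝 xs, ∀ x ∈ S ∩ N, ¬ (∀ j, F x j < F xs j)) :
    ¬ ∃ d : Fin n → ℝ,
      (∃ (dk : ℕ → Fin n → ℝ) (tk : ℕ → ℝ),
        Tendsto dk atTop (𝓝 d) ∧ (∀ k, 0 < tk k) ∧
        Tendsto tk atTop (𝓝 0) ∧ ∀ k, xs + tk k • dk k ∈ S) ∧
      (∀ j, JF.mulVec d j < 0) := by
  rintro ⟨d, ⟨dk, tk, hdk, htkpos, htk0, hmem⟩, hneg⟩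
  obtain ⟨N, hN, hw⟩ := hweak
  set A := LinearMap.toContinuousLinearMap (Matrix.mulVecLin JF) with hA
  set xk : ℕ → Fin n → ℝ := fun k => xs + tk k • dk k with hxkdef
  have hxk : Tendsto xk atTop (𝓝 xs) := by
    have h : Tendsto (fun k => tk k • dk k) atTop (𝓝 ((0:ℝ) • d)) := htk0.smul hdk
    rw [zero_smul] at h
    simpa using tendsto_const_nhds.add h
  have hsub : ∀ k, xk k - xs = tk k • dk k := fun k => by simp [hxkdef]
  have hlo := hF.isLittleO.comp_tendsto hxk
  -- bound dk
  obtain ⟨M, hM⟩ : ∃ M, ∀ k, ‖dk k‖ ≤ M := by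
    obtain ⟨M, hM⟩ := hdk.norm.bddAbove_range
    exact ⟨M, fun k => hM ⟨k, rfl⟩⟩
  have hbigO : (fun k => xk k - xs) =O[atTop] fun k => tk k := by
    rw [Asymptotics.isBigO_iff]
    refine ⟨M, Eventually.of_forall fun k => ?_⟩
    rw [hsub k, norm_smul, Real.norm_eq_abs, abs_of_pos (htkpos k)]
    nlinarith [hM k, htkpos k, norm_nonneg (dk k)]
  have hlo2 : (fun k => F (xk k) - F xs - A (xk k - xs)) =o[atTop] fun k => tk k :=
    hlo.trans_isBigO hbigO
  have h1 : Tendsto (fun k => (tk k)⁻¹ • (F (xk k) - F xs - A (xk k - xs))) atTop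
      (𝓝 0) := by
    rw [NormedAddCommGroup.tendsto_nhds_zero]
    intro ε hε
    have h2 := hlo2.def (show (0:ℝ) < ε/2 by linarith)
    filter_upwards [h2] with k hk
    rw [norm_smul, Real.norm_eq_abs, abs_of_pos (inv_pos.2 (htkpos k))]
    have htk : ‖tk k‖ = tk k := by
      rw [Real.norm_eq_abs, abs_of_pos (htkpos k)]
    rw [htk] at hk
    have : (tk k)⁻¹ * ‖F (xk k) - F xs - A (xk k - xs)‖ ≤ ε/2 := by
      rw [inv_mul_le_iff₀ (htkpos k)]
      linarith [hk]
    linarith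
  have h2 : Tendsto (fun k => A (dk k)) atTop (𝓝 (A d)) :=
    (A.continuous.tendsto d).comp hdk
  have heq : ∀ k, (tk k)⁻¹ • (F (xk k) - F xs - A (xk k - xs)) + A (dk k)
      = (tk k)⁻¹ • (F (xk k) - F xs) := by
    intro k
    rw [hsub k, map_smul, smul_sub, smul_smul,
      inv_mul_cancel₀ (htkpos k).ne', one_smul]
    abel
  have key : Tendsto (fun k => (tk k)⁻¹ • (F (xk k) - F xs)) atTop (𝓝 (A d)) := by
    have := h1.add h2
    rw [zero_add] at this
    exact Tendsto.congr heq this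
  have hAd : A d = JF.mulVec d := rfl
  have hall : ∀ᶠ k in atTop, ∀ j, F (xk k) j < F xs j := by
    rw [eventually_all]
    intro j
    have hj : Tendsto (fun k => (tk k)⁻¹ * (F (xk k) j - F xs j)) atTop
        (𝓝 (JF.mulVec d j)) := by
      have := tendsto_pi_nhds.1 key j
      simpa [hAd] using this
    have hev : ∀ᶠ k in atTop, (tk k)⁻¹ * (F (xk k) j - F xs j) < 0 :=
      hj.eventually_lt_const (hneg j)
    filter_upwards [hev] with k hk
    nlinarith [inv_pos.2 (htkpos k)]
  have hN' : ∀ᶠ k in atTop, xk k ∈ N := hxk.eventually_mem hN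
  obtain ⟨k, hk1, hk2⟩ := (hall.and hN').exists
  exact hw (xk k) ⟨hmem k, hk2⟩ hk1
end

section
/- Suppose x* ∈ S (the feasible set of the MOP) satisfies: there exists (λ,u,v,w) ∈ (ℝʳ₊∖{0}) × ℝᵐ × ℝⁿ₊ × ℝⁿ₊ with JF(x*)ᵀλ + JG(x*)ᵀu − v + w = 0, v·(x*−a) = 0, w·(b−x*) = 0. If F is pseudoconvex at x* and there is a neighbourhood N(0) of 0 with N(0) ∩ (S − x*) ⊆ Ker JG(x*), then x* is locally weakly efficient. -/
open Matrix

open Filter Topology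

/-- KKT stationarity + pseudoconvexity at x* + local kernel condition imply
local weak efficiency. -/
theorem stmt4 (n m r : ℕ) (F : (Fin n → ℝ) → (Fin r → ℝ)) (G : (Fin n → ℝ) → (Fin m → ℝ))
    (JF : Matrix (Fin r) (Fin n) ℝ) (JG : Matrix (Fin m) (Fin n) ℝ)
    (a b : Fin n → ℝ) (S : Set (Fin n → ℝ))
    (hS : S = {x | G x = 0 ∧ (∀ i, a i ≤ x i) ∧ (∀ i, x i ≤ b i)})
    (xs : Fin n → ℝ) (hxs : xs ∈ S)
    (hKKT : ∃ (l : Fin r → ℝ) (u : Fin m → ℝ) (v w : Fin n → ℝ),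
      (∀ j, 0 ≤ l j) ∧ l ≠ 0 ∧ (∀ i, 0 ≤ v i) ∧ (∀ i, 0 ≤ w i) ∧
      JF.transpose.mulVec l + JG.transpose.mulVec u - v + w = 0 ∧
      v ⬝ᵥ (xs - a) = 0 ∧ w ⬝ᵥ (b - xs) = 0)
    (hpseudo : ∀ x' ∈ S, (∀ j, F x' j < F xs j) → ∀ j, JF.mulVec (x' - xs) j < 0)
    (hker : ∃ N0 ∈ 𝓝 (0 : Fin n → ℝ), ∀ y ∈ N0, xs + y ∈ S → JG.mulVec y = 0) :
    ∃ N ∈ 𝓝 xs, ¬ ∃ x ∈ S ∩ N, ∀ j, F x j < F xs j := by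
  obtain ⟨l, u, v, w, hl0, hlne, hv0, hw0, heq, hva, hwb⟩ := hKKT
  obtain ⟨N0, hN0, hkr⟩ := hker
  refine ⟨(fun x => x - xs) ⁻¹' N0, ?_, ?_⟩
  · have hc : Continuous fun x : Fin n → ℝ => x - xs :=
      continuous_id.sub continuous_const
    have := hc.continuousAt (x := xs) |>.preimage_mem_nhds (by simpa using hN0)
    simpa using this
  · rintro ⟨x, ⟨hxS, hxN⟩, hFx⟩
    set d : Fin n → ℝ := x - xs with hd
    have hJG : JG.mulVec d = 0 := hkr d hxN (by simpa [hd] using hxS)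
    have hJF : ∀ j, JF.mulVec d j < 0 := hpseudo x hxS hFx
    -- constraints at xs and x
    rw [hS] at hxs hxS
    obtain ⟨_, hxa, hxb⟩ := hxs
    obtain ⟨_, hxa', hxb'⟩ := hxS
    -- dot the KKT equation with d
    have h := congrArg (fun z => z ⬝ᵥ d) heq
    simp only [add_dotProduct, sub_dotProduct, zero_dotProduct] at h
    have h1 : JF.transpose.mulVec l ⬝ᵥ d = l ⬝ᵥ JF.mulVec d := by
      rw [Matrix.mulVec_transpose, ← Matrix.dotProduct_mulVec]
    have h2 : JG.transpose.mulVec u ⬝ᵥ d = u ⬝ᵥ JG.mulVec d := by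
      rw [Matrix.mulVec_transpose, ← Matrix.dotProduct_mulVec]
    rw [h1, h2, hJG] at h
    simp only [dotProduct_zero] at h
    -- l ⬝ᵥ JF.mulVec d < 0
    obtain ⟨j0, hj0⟩ : ∃ j, l j ≠ 0 := Function.ne_iff.mp hlne
    have hlt : l ⬝ᵥ JF.mulVec d < 0 := by
      have : ∑ j, l j * JF.mulVec d j < ∑ _j : Fin r, (0 : ℝ) := by
        refine Finset.sum_lt_sum (fun i _ => mul_nonpos_of_nonneg_of_nonpos (hl0 i) (hJF i).le)
          ⟨j0, Finset.mem_univ _, ?_⟩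
        exact mul_neg_of_pos_of_neg (lt_of_le_of_ne (hl0 j0) (Ne.symm hj0)) (hJF j0)
      simpa [dotProduct] using this
    -- componentwise complementarity
    have hva' : ∀ i, v i * (xs i - a i) = 0 := by
      have := (Finset.sum_eq_zero_iff_of_nonneg
        (fun i _ => mul_nonneg (hv0 i) (sub_nonneg.mpr (hxa i)))).mp
        (by simpa [dotProduct] using hva)
      exact fun i => by simpa using this i (Finset.mem_univ i)
    have hwb' : ∀ i, w i * (b i - xs i) = 0 := by
      have := (Finset.sum_eq_zero_iff_of_nonneg
        (fun i _ => mul_nonneg (hw0 i) (sub_nonneg.mpr (hxb i)))).mp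
        (by simpa [dotProduct] using hwb)
      exact fun i => by simpa using this i (Finset.mem_univ i)
    have hvd : 0 ≤ v ⬝ᵥ d := by
      refine Finset.sum_nonneg fun i _ => ?_
      have : v i * d i = v i * (x i - a i) := by
        show v i * (x i - xs i) = v i * (x i - a i)
        linear_combination - hva' i
      rw [this]
      exact mul_nonneg (hv0 i) (sub_nonneg.mpr (hxa' i))
    have hwd : w ⬝ᵥ d ≤ 0 := by
      refine Finset.sum_nonpos fun i _ => ?_
      have : w i * d i = w i * (x i - b i) := by
        show w i * (x i - xs i) = w i * (x i - b i)
        linear_combination hwb' i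
      rw [this]
      exact mul_nonpos_of_nonneg_of_nonpos (hw0 i) (sub_nonpos.mpr (hxb' i))
    linarith
end

section
/- Suppose x* ∈ S satisfies the Pareto KKT conditions (there exists (λ,u,v,w) ∈ (ℝʳ₊∖{0}) × ℝᵐ × ℝⁿ₊ × ℝⁿ₊ with JF(x*)ᵀλ + JG(x*)ᵀu − v + w = 0, v·(x*−a)=0, w·(b−x*)=0). If F is strictly pseudoconvex at x* and there is a neighbourhood N(0) of 0 with N(0) ∩ (S − x*) ⊆ Ker JG(x*), then x* is locally efficient (Pareto optimal on S ∩ N(x*) for some neighbourhood N(x*)). -/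
open Matrix

open Filter Topology

/-- KKT stationarity + strict pseudoconvexity at x* + local kernel condition imply
local efficiency. -/
theorem stmt5 (n m r : ℕ) (F : (Fin n → ℝ) → (Fin r → ℝ)) (G : (Fin n → ℝ) → (Fin m → ℝ))
    (JF : Matrix (Fin r) (Fin n) ℝ) (JG : Matrix (Fin m) (Fin n) ℝ)
    (a b : Fin n → ℝ) (S : Set (Fin n → ℝ))
    (hS : S = {x | G x = 0 ∧ (∀ i, a i ≤ x i) ∧ (∀ i, x i ≤ b i)})
    (xs : Fin n → ℝ) (hxs : xs ∈ S)
    (hKKT : ∃ (l : Fin r → ℝ) (u : Fin m → ℝ) (v w : Fin n → ℝ),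
      (∀ j, 0 ≤ l j) ∧ l ≠ 0 ∧ (∀ i, 0 ≤ v i) ∧ (∀ i, 0 ≤ w i) ∧
      JF.transpose.mulVec l + JG.transpose.mulVec u - v + w = 0 ∧
      v ⬝ᵥ (xs - a) = 0 ∧ w ⬝ᵥ (b - xs) = 0)
    (hspseudo : ∀ x' ∈ S, x' ≠ xs → (∀ j, F x' j ≤ F xs j) →
      ∀ j, JF.mulVec (x' - xs) j < 0)
    (hker : ∃ N0 ∈ 𝓝 (0 : Fin n → ℝ), ∀ y ∈ N0, xs + y ∈ S → JG.mulVec y = 0) :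
    ∃ N ∈ 𝓝 xs, ¬ ∃ x ∈ S ∩ N, (∀ j, F x j ≤ F xs j) ∧ F x ≠ F xs := by

  obtain ⟨l, u, v, w, hl, hl0, hv, hw, heq, hva, hwb⟩ := hKKT
  obtain ⟨N0, hN0, hkerN⟩ := hker
  refine ⟨(fun x => x - xs) ⁻¹' N0, ?_, ?_⟩
  · exact (continuous_id.sub continuous_const).continuousAt.preimage_mem_nhds
      (by simpa using hN0)
  rintro ⟨x, ⟨hxS, hxN⟩, hFle, hFne⟩
  have hxne : x ≠ xs := fun h => hFne (by rw [h])
  set d : Fin n → ℝ := x - xs with hd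
  have hJG : JG.mulVec d = 0 := hkerN d hxN (by simpa [hd] using hxS)
  have hJF : ∀ j, JF.mulVec d j < 0 := hspseudo x hxS hxne hFle
  -- dot the KKT equation with d
  have h1 : (JF.transpose.mulVec l) ⬝ᵥ d + (JG.transpose.mulVec u) ⬝ᵥ d
      - v ⬝ᵥ d + w ⬝ᵥ d = 0 := by
    have := congrArg (· ⬝ᵥ d) heq
    simpa [add_dotProduct, sub_dotProduct] using this
  have h2 : (JF.transpose.mulVec l) ⬝ᵥ d = l ⬝ᵥ JF.mulVec d := by
    rw [Matrix.mulVec_transpose, ← Matrix.dotProduct_mulVec]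
  have h3 : (JG.transpose.mulVec u) ⬝ᵥ d = 0 := by
    rw [Matrix.mulVec_transpose, ← Matrix.dotProduct_mulVec, hJG, dotProduct_zero]
  have hxmem : G x = 0 ∧ (∀ i, a i ≤ x i) ∧ (∀ i, x i ≤ b i) := by rwa [hS] at hxS
  have hvd : 0 ≤ v ⬝ᵥ d := by
    have : v ⬝ᵥ d = v ⬝ᵥ (x - a) - v ⬝ᵥ (xs - a) := by
      rw [← dotProduct_sub]; congr 1; ext i; simp [hd]
    rw [this, hva, sub_zero]
    exact Finset.sum_nonneg fun i _ => mul_nonneg (hv i) (by simpa using hxmem.2.1 i)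
  have hwd : w ⬝ᵥ d ≤ 0 := by
    have : w ⬝ᵥ d = w ⬝ᵥ (b - xs) - w ⬝ᵥ (b - x) := by
      rw [← dotProduct_sub]; congr 1; ext i; simp [hd]
    rw [this, hwb, zero_sub, neg_nonpos]
    exact Finset.sum_nonneg fun i _ => mul_nonneg (hw i) (by simpa using hxmem.2.2 i)
  have hge : 0 ≤ l ⬝ᵥ JF.mulVec d := by
    have : l ⬝ᵥ JF.mulVec d = v ⬝ᵥ d - w ⬝ᵥ d := by
      rw [← h2]; linarith [h1, h3]
    rw [this]; linarith
  have hlt : l ⬝ᵥ JF.mulVec d < 0 := by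
    obtain ⟨j0, hj0⟩ := Function.ne_iff.mp hl0
    have hj0pos : 0 < l j0 := lt_of_le_of_ne (hl j0) (by simpa [eq_comm] using hj0)
    have : ∑ j, l j * JF.mulVec d j < ∑ _j : Fin r, (0 : ℝ) :=
      Finset.sum_lt_sum (fun j _ => mul_nonpos_of_nonneg_of_nonpos (hl j) (hJF j).le)
        ⟨j0, Finset.mem_univ j0, mul_neg_of_pos_of_neg hj0pos (hJF j0)⟩
    simpa [dotProduct] using this
  linarith
end

section
/- The Pareto KKT-stationarity condition at x* (existence of (λ,u,v,w) ∈ (ℝʳ₊∖{0}) × ℝᵐ × ℝⁿ₊ × ℝⁿ₊ with JF(x*)ᵀλ + JG(x*)ᵀu − v + w = 0 and v·(x*−a) = w·(b−x*) = 0) holds if and only if there is no d ∈ ℝⁿ with JF(x*)d < 0 componentwise, JG(x*)d = 0, dᵢ ≥ 0 for all i with xᵢ* = aᵢ, and dᵢ ≤ 0 for all i with xᵢ* = bᵢ. -/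
open Matrix

open Finset

lemma farkas_fin {N : ℕ} : ∀ (k : ℕ) (v : Fin k → Fin N → ℝ) (b : Fin N → ℝ),
    (∃ c : Fin k → ℝ, (∀ i, 0 ≤ c i) ∧ b = ∑ i, c i • v i) ∨
    (∃ y : Fin N → ℝ, (∀ i, 0 ≤ y ⬝ᵥ v i) ∧ y ⬝ᵥ b < 0) := by
  intro k
  induction k with
  | zero =>
    intro v b
    by_cases hb : b = 0
    · exact Or.inl ⟨0, fun i => le_refl 0, by simp [hb]⟩
    · refine Or.inr ⟨-b, fun i => i.elim0, ?_⟩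
      have h1 : (0:ℝ) < b ⬝ᵥ b := by
        have hnn : 0 ≤ b ⬝ᵥ b := Finset.sum_nonneg fun i _ => mul_self_nonneg _
        exact lt_of_le_of_ne hnn
          (Ne.symm fun h => hb ((dotProduct_self_eq_zero).mp h))
      simpa [neg_dotProduct] using h1
  | succ k ih =>
    intro v b
    set a0 := v 0 with ha0
    set w : Fin k → Fin N → ℝ := fun i => v i.succ with hw
    rcases ih w b with ⟨c, hc, hb⟩ | ⟨y, hyw, hyb⟩
    · refine Or.inl ⟨Fin.cons 0 c, ?_, ?_⟩
      · intro i; refine Fin.cases ?_ ?_ i <;> simp [hc]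
      · rw [Fin.sum_univ_succ]; simpa using hb
    · by_cases hya : 0 ≤ y ⬝ᵥ a0
      · refine Or.inr ⟨y, ?_, hyb⟩
        intro i; refine Fin.cases ?_ ?_ i
        · simpa using hya
        · intro j; exact hyw j
      · push_neg at hya
        have hyane : y ⬝ᵥ a0 ≠ 0 := ne_of_lt hya
        set w' : Fin k → Fin N → ℝ := fun i => w i - (y ⬝ᵥ w i / (y ⬝ᵥ a0)) • a0 with hw'
        set b' := b - (y ⬝ᵥ b / (y ⬝ᵥ a0)) • a0 with hb'
        rcases ih w' b' with ⟨c, hc, hbc⟩ | ⟨z, hzw, hzb⟩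
        · set S := ∑ i, c i * (y ⬝ᵥ w i) with hS
          set mu := (y ⬝ᵥ b - S) / (y ⬝ᵥ a0) with hmu
          have hSnn : 0 ≤ S := Finset.sum_nonneg fun i _ => mul_nonneg (hc i) (hyw i)
          have hmupos : 0 ≤ mu := le_of_lt (div_pos_of_neg_of_neg (by linarith) hya)
          have expand : ∑ i, c i • w' i
              = (∑ i, c i • w i) - (S / (y ⬝ᵥ a0)) • a0 := by
            have step1 : ∀ i : Fin k,
                c i • w' i = c i • w i - (c i * (y ⬝ᵥ w i) / (y ⬝ᵥ a0)) • a0 := by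
              intro i
              rw [hw']
              rw [smul_sub, smul_smul, mul_div_assoc]
            calc ∑ i, c i • w' i
                = ∑ i, (c i • w i - (c i * (y ⬝ᵥ w i) / (y ⬝ᵥ a0)) • a0) := by
                  exact Finset.sum_congr rfl fun i _ => step1 i
              _ = (∑ i, c i • w i) - ∑ i, (c i * (y ⬝ᵥ w i) / (y ⬝ᵥ a0)) • a0 :=
                  Finset.sum_sub_distrib _ _
              _ = (∑ i, c i • w i) - (S / (y ⬝ᵥ a0)) • a0 := by
                  rw [← Finset.sum_smul, ← Finset.sum_div]
          have hbeq : b = (∑ i, c i • w i) + mu • a0 := by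
            have : b = b' + (y ⬝ᵥ b / (y ⬝ᵥ a0)) • a0 := by rw [hb']; abel
            rw [this, hbc, expand, hmu, sub_div]
            rw [sub_smul]
            abel
          refine Or.inl ⟨Fin.cons mu c, ?_, ?_⟩
          · intro i; refine Fin.cases ?_ ?_ i <;> simp [hmupos, hc]
          · rw [Fin.sum_univ_succ]
            simp only [Fin.cons_zero, Fin.cons_succ]
            rw [hbeq]; exact (add_comm _ _)
        · refine Or.inr ⟨z - (z ⬝ᵥ a0 / (y ⬝ᵥ a0)) • y, ?_, ?_⟩
          · intro i; refine Fin.cases ?_ ?_ i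
            · show 0 ≤ (z - (z ⬝ᵥ a0 / (y ⬝ᵥ a0)) • y) ⬝ᵥ a0
              rw [sub_dotProduct, smul_dotProduct, smul_eq_mul,
                div_mul_cancel₀ _ hyane, sub_self]
            · intro j
              have h1 := hzw j
              rw [hw', dotProduct_sub, dotProduct_smul, smul_eq_mul] at h1
              show 0 ≤ (z - (z ⬝ᵥ a0 / (y ⬝ᵥ a0)) • y) ⬝ᵥ w j
              rw [sub_dotProduct, smul_dotProduct, smul_eq_mul]
              have : z ⬝ᵥ a0 / (y ⬝ᵥ a0) * (y ⬝ᵥ w j)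
                  = y ⬝ᵥ w j / (y ⬝ᵥ a0) * (z ⬝ᵥ a0) := by ring
              rw [this]; exact h1
          · rw [hb', dotProduct_sub, dotProduct_smul, smul_eq_mul] at hzb
            rw [sub_dotProduct, smul_dotProduct, smul_eq_mul]
            have : z ⬝ᵥ a0 / (y ⬝ᵥ a0) * (y ⬝ᵥ b)
                = y ⬝ᵥ b / (y ⬝ᵥ a0) * (z ⬝ᵥ a0) := by ring
            rw [this]; exact hzb

lemma farkas_gen {N : ℕ} {ι : Type*} [Fintype ι] (v : ι → Fin N → ℝ) (b : Fin N → ℝ) :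
    (∃ c : ι → ℝ, (∀ i, 0 ≤ c i) ∧ b = ∑ i, c i • v i) ∨
    (∃ y : Fin N → ℝ, (∀ i, 0 ≤ y ⬝ᵥ v i) ∧ y ⬝ᵥ b < 0) := by
  obtain e := Fintype.equivFin ι
  rcases farkas_fin (Fintype.card ι) (fun j => v (e.symm j)) b with ⟨c, hc, hb⟩ | ⟨y, hy, hyb⟩
  · refine Or.inl ⟨fun i => c (e i), fun i => hc _, ?_⟩
    rw [hb, ← Equiv.sum_comp e.symm (fun i => c (e i) • v i)]
    simp
  · exact Or.inr ⟨y, fun i => by simpa using hy (e i), hyb⟩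

lemma dot_snoc {n : ℕ} (y : Fin (n+1) → ℝ) (q : Fin n → ℝ) (t : ℝ) :
    y ⬝ᵥ Fin.snoc q t = (fun i => y (Fin.castSucc i)) ⬝ᵥ q + y (Fin.last n) * t := by
  simp [dotProduct, Fin.sum_univ_castSucc]

/-- Pareto KKT-stationarity holds iff there is no linearized descent direction
(Motzkin's transposition theorem). -/
theorem stmt6 (n m r : ℕ)
    (JF : Matrix (Fin r) (Fin n) ℝ) (JG : Matrix (Fin m) (Fin n) ℝ)
    (a b xs : Fin n → ℝ) (hax : ∀ i, a i ≤ xs i) (hxb : ∀ i, xs i ≤ b i) :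
    (∃ (l : Fin r → ℝ) (u : Fin m → ℝ) (v w : Fin n → ℝ),
      (∀ j, 0 ≤ l j) ∧ l ≠ 0 ∧ (∀ i, 0 ≤ v i) ∧ (∀ i, 0 ≤ w i) ∧
      JF.transpose.mulVec l + JG.transpose.mulVec u - v + w = 0 ∧
      v ⬝ᵥ (xs - a) = 0 ∧ w ⬝ᵥ (b - xs) = 0)
    ↔ ¬ ∃ d : Fin n → ℝ, (∀ j, JF.mulVec d j < 0) ∧ JG.mulVec d = 0 ∧
        (∀ i, xs i = a i → 0 ≤ d i) ∧ (∀ i, xs i = b i → d i ≤ 0) := by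
  classical
  constructor
  · -- easy direction
    rintro ⟨l, u, v, w, hl, hlne, hv, hw, heq, hva, hwb⟩ ⟨d, hd1, hd2, hd3, hd4⟩
    have key : (JF.transpose.mulVec l + JG.transpose.mulVec u - v + w) ⬝ᵥ d = 0 := by
      rw [heq, zero_dotProduct]
    rw [add_dotProduct, sub_dotProduct, add_dotProduct] at key
    have h1 : (JF.transpose.mulVec l) ⬝ᵥ d = l ⬝ᵥ (JF.mulVec d) := by
      rw [Matrix.mulVec_transpose, ← Matrix.dotProduct_mulVec]
    have h2 : (JG.transpose.mulVec u) ⬝ᵥ d = 0 := by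
      rw [Matrix.mulVec_transpose, ← Matrix.dotProduct_mulVec, hd2, dotProduct_zero]
    obtain ⟨j0, hj0⟩ : ∃ j0, l j0 ≠ 0 := Function.ne_iff.mp hlne
    have hlneg : l ⬝ᵥ (JF.mulVec d) < 0 := by
      have := Finset.sum_lt_sum (f := fun j => l j * (JF.mulVec d) j)
        (g := fun _ => (0:ℝ))
        (fun j _ => mul_nonpos_of_nonneg_of_nonpos (hl j) (le_of_lt (hd1 j)))
        ⟨j0, Finset.mem_univ _, mul_neg_of_pos_of_neg (lt_of_le_of_ne (hl j0) (Ne.symm hj0)) (hd1 j0)⟩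
      simpa [dotProduct] using this
    have hvd : 0 ≤ v ⬝ᵥ d := by
      apply Finset.sum_nonneg
      intro i _
      rcases eq_or_lt_of_le (hv i) with h | h
      · simp [← h]
      · have hzero := (Finset.sum_eq_zero_iff_of_nonneg
          (fun i _ => mul_nonneg (hv i) (by simpa [sub_nonneg] using hax i))).mp hva i
          (Finset.mem_univ i)
        have hxa : xs i = a i := by
          rcases mul_eq_zero.mp hzero with h0 | h0
          · exact absurd h0 (ne_of_gt h)
          · exact sub_eq_zero.mp h0
        exact mul_nonneg (hv i) (hd3 i hxa)
    have hwd : w ⬝ᵥ d ≤ 0 := by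
      apply Finset.sum_nonpos
      intro i _
      rcases eq_or_lt_of_le (hw i) with h | h
      · simp [← h]
      · have hzero := (Finset.sum_eq_zero_iff_of_nonneg
          (fun i _ => mul_nonneg (hw i) (by simpa [sub_nonneg] using hxb i))).mp hwb i
          (Finset.mem_univ i)
        have hxbe : xs i = b i := by
          rcases mul_eq_zero.mp hzero with h0 | h0
          · exact absurd h0 (ne_of_gt h)
          · exact (sub_eq_zero.mp h0).symm
        exact mul_nonpos_of_nonneg_of_nonpos (hw i) (hd4 i hxbe)
    rw [h1, h2] at key
    linarith
  · -- hard direction via Farkas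
    intro hnod
    set g : (Fin r ⊕ (Fin m ⊕ (Fin m ⊕ (Fin n ⊕ Fin n)))) → Fin (n+1) → ℝ :=
      fun idx => match idx with
        | .inl j => Fin.snoc (fun i => JF j i) 1
        | .inr (.inl k) => Fin.snoc (fun i => JG k i) 0
        | .inr (.inr (.inl k)) => Fin.snoc (fun i => -JG k i) 0
        | .inr (.inr (.inr (.inl i0))) =>
            if xs i0 = a i0 then Fin.snoc (fun i => -(Pi.single (M := fun _ => ℝ) i0 1 i)) 0 else 0
        | .inr (.inr (.inr (.inr i0))) =>
            if xs i0 = b i0 then Fin.snoc (fun i => Pi.single (M := fun _ => ℝ) i0 1 i) 0 else 0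
      with hg
    set bvec : Fin (n+1) → ℝ := Fin.snoc (0 : Fin n → ℝ) 1 with hbvec
    rcases farkas_gen g bvec with ⟨c, hc, hb⟩ | ⟨y, hyg, hyb⟩
    · -- build multipliers
      set l : Fin r → ℝ := fun j => c (.inl j) with hldef
      set u : Fin m → ℝ := fun k => c (.inr (.inl k)) - c (.inr (.inr (.inl k))) with hudef
      set v : Fin n → ℝ := fun i => if xs i = a i then c (.inr (.inr (.inr (.inl i)))) else 0
        with hvdef
      set w : Fin n → ℝ := fun i => if xs i = b i then c (.inr (.inr (.inr (.inr i)))) else 0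
        with hwdef
      have hlast : (1:ℝ) = ∑ j, c (.inl j) := by
        have h := congrFun hb (Fin.last n)
        simpa only [hbvec, hg, Fin.snoc_last, Finset.sum_apply, Pi.smul_apply, smul_eq_mul,
          Fintype.sum_sum_type, ite_apply, Pi.zero_apply, mul_ite, mul_zero, mul_one,
          ite_self, Finset.sum_const_zero, add_zero] using h
      have hlne : l ≠ 0 := by
        intro h0
        have hz : ∀ j, c (Sum.inl j) = (0:ℝ) := fun j => congrFun h0 j
        rw [Finset.sum_congr rfl (fun j _ => hz j), Finset.sum_const_zero] at hlast
        exact one_ne_zero hlast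
      refine ⟨l, u, v, w, fun j => hc _, hlne, ?_, ?_, ?_, ?_, ?_⟩
      · intro i; rw [hvdef]; dsimp only; split
        · exact hc _
        · exact le_refl 0
      · intro i; rw [hwdef]; dsimp only; split
        · exact hc _
        · exact le_refl 0
      · funext i
        have h := congrFun hb (Fin.castSucc i)
        simp only [hbvec, hg, Fin.snoc_castSucc, Finset.sum_apply, Pi.smul_apply, smul_eq_mul,
          Fintype.sum_sum_type, ite_apply, Pi.zero_apply, mul_ite, mul_zero] at h
        have hIa : ∑ i0, (if xs i0 = a i0
            then c (.inr (.inr (.inr (.inl i0)))) * -Pi.single (M := fun _ => ℝ) i0 1 i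
            else 0) = -v i := by
          rw [hvdef]
          rw [Finset.sum_eq_single i]
          · dsimp only; split <;> simp
          · intro i0 _ hne
            rw [Pi.single_eq_of_ne (Ne.symm hne)]
            simp
          · intro habs; exact absurd (Finset.mem_univ i) habs
        have hIb : ∑ i0, (if xs i0 = b i0
            then c (.inr (.inr (.inr (.inr i0)))) * Pi.single (M := fun _ => ℝ) i0 1 i
            else 0) = w i := by
          rw [hwdef]
          rw [Finset.sum_eq_single i]
          · dsimp only; split <;> simp
          · intro i0 _ hne
            rw [Pi.single_eq_of_ne (Ne.symm hne)]
            simp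
          · intro habs; exact absurd (Finset.mem_univ i) habs
        rw [hIa, hIb] at h
        have hJF : ∑ j, c (Sum.inl j) * JF j i = (JF.transpose.mulVec l) i := by
          simp [Matrix.mulVec, dotProduct, Matrix.transpose_apply, hldef, mul_comm]
        have hJG : (∑ k, c (Sum.inr (Sum.inl k)) * JG k i)
            + ∑ k, c (Sum.inr (Sum.inr (Sum.inl k))) * -JG k i
            = (JG.transpose.mulVec u) i := by
          rw [← Finset.sum_add_distrib]
          simp only [Matrix.mulVec, dotProduct, Matrix.transpose_apply, hudef]
          apply Finset.sum_congr rfl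
          intro k _
          ring
        show (JF.transpose.mulVec l) i + (JG.transpose.mulVec u) i - v i + w i = 0
        rw [← hJF, ← hJG]
        linarith [h]
      · rw [hvdef]
        apply Finset.sum_eq_zero
        intro i _
        by_cases hi : xs i = a i
        · simp [hi]
        · simp [hi]
      · rw [hwdef]
        apply Finset.sum_eq_zero
        intro i _
        by_cases hi : xs i = b i
        · simp [hi]
        · simp [hi]
    · -- build direction d
      exfalso
      apply hnod
      set p : Fin n → ℝ := fun i => y (Fin.castSucc i) with hp
      set t : ℝ := y (Fin.last n) with ht
      have htneg : t < 0 := by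
        have := hyb
        rw [hbvec, dot_snoc] at this
        simpa using this
      refine ⟨fun i => -p i, ?_, ?_, ?_, ?_⟩
      · intro j
        have := hyg (.inl j)
        rw [hg, dot_snoc] at this
        have hrow : (JF.mulVec fun i => -p i) j = -(p ⬝ᵥ fun i => JF j i) := by
          simp [Matrix.mulVec, dotProduct, mul_comm]
        rw [hrow]
        have : 0 ≤ p ⬝ᵥ (fun i => JF j i) + t * 1 := this
        linarith
      · funext k
        have h1 := hyg (.inr (.inl k))
        have h2 := hyg (.inr (.inr (.inl k)))
        rw [hg, dot_snoc] at h1 h2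
        simp only [mul_zero, add_zero] at h1 h2
        have hneg : (p ⬝ᵥ fun i => -JG k i) = -(p ⬝ᵥ fun i => JG k i) := by
          simp [dotProduct, mul_neg]
        rw [hneg] at h2
        have hz : (p ⬝ᵥ fun i => JG k i) = 0 := le_antisymm (by linarith) h1
        show (JG.mulVec fun i => -p i) k = 0
        have : (JG.mulVec fun i => -p i) k = -(p ⬝ᵥ fun i => JG k i) := by
          simp [Matrix.mulVec, dotProduct, mul_comm]
        rw [this, hz, neg_zero]
      · intro i hi
        have := hyg (.inr (.inr (.inr (.inl i))))
        simp only [hg] at this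
        rw [if_pos hi, dot_snoc] at this
        have hps : (p ⬝ᵥ fun i' => -(Pi.single (M := fun _ => ℝ) i 1 i')) = -p i := by
          simp [dotProduct, Pi.single_apply, mul_neg]
        rw [hps] at this
        simpa using this
      · intro i hi
        have := hyg (.inr (.inr (.inr (.inr i))))
        simp only [hg] at this
        rw [if_pos hi, dot_snoc] at this
        have hps : (p ⬝ᵥ fun i' => Pi.single (M := fun _ => ℝ) i 1 i') = p i := by
          simp [dotProduct, Pi.single_apply]
        rw [hps] at this
        simpa using this
end

section
/- With notation as in the direction-finding subproblem: if d_N = δ_N(λ(x),x) ≠ 0 for an optimal λ(x) of (P_x), then d_N is a multiobjective reduced descent direction, i.e., U_N(x) d_N < 0 componentwise, dᵢ ≥ 0 for all i ∈ N with xᵢ = aᵢ, and dᵢ ≤ 0 for all i ∈ N with xᵢ = bᵢ. -/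
open Matrix

/-- Unit simplex in ℝʳ. -/
def simplexSet (r : ℕ) : Set (Fin r → ℝ) := {l | (∀ j, 0 ≤ l j) ∧ ∑ j, l j = 1}

/-- Objective of the direction-finding subproblem (P_x). -/
noncomputable def fObj {p r : ℕ} (U : Matrix (Fin r) (Fin p) ℝ) (φ : ℝ → ℝ)
    (a b x : Fin p → ℝ) (l : Fin r → ℝ) : ℝ :=
  (1/2) * ∑ i, (φ (b i - x i) * (max 0 (-(U.transpose.mulVec l i)))^2
              + φ (x i - a i) * (max 0 (U.transpose.mulVec l i))^2)

/-- The vector δ_N(λ, x). -/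
noncomputable def deltaN {p r : ℕ} (U : Matrix (Fin r) (Fin p) ℝ) (φ : ℝ → ℝ)
    (a b x : Fin p → ℝ) (l : Fin r → ℝ) : Fin p → ℝ :=
  fun i => φ (b i - x i) * max 0 (-(U.transpose.mulVec l i))
         - φ (x i - a i) * max 0 (U.transpose.mulVec l i)

lemma max_mul_self' (t : ℝ) : max 0 t * t = (max 0 t)^2 := by
  rcases le_total t 0 with h|h
  · rw [max_eq_left h]; ring
  · rw [max_eq_right h]; ring

lemma sq_max_shift' (m h : ℝ) : (max 0 (m + h))^2 ≤ (max 0 m + h)^2 := by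
  have h1 : max 0 (m + h) ≤ |max 0 m + h| := by
    apply max_le (abs_nonneg _)
    calc m + h ≤ max 0 m + h := by
          have := le_max_right (0:ℝ) m; linarith
      _ ≤ |max 0 m + h| := le_abs_self _
  calc (max 0 (m + h))^2 ≤ |max 0 m + h|^2 :=
        pow_le_pow_left₀ (le_max_left 0 (m+h)) h1 2
    _ = (max 0 m + h)^2 := sq_abs _

lemma comp_bound' (cm cp tt uu s : ℝ) (hcm : 0 ≤ cm) (hcp : 0 ≤ cp) :
    (1/2) * (cm * (max 0 (-(tt + s*(uu - tt))))^2 + cp * (max 0 (tt + s*(uu - tt)))^2)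
    ≤ (1/2) * (cm * (max 0 (-tt))^2 + cp * (max 0 tt)^2)
      - s * (uu * (cm * max 0 (-tt) - cp * max 0 tt))
      - s * (cm * (max 0 (-tt))^2 + cp * (max 0 tt)^2)
      + s^2 * ((1/2) * (cm + cp) * (uu - tt)^2) := by
  have e1 : (max 0 (-(tt + s*(uu-tt))))^2 ≤ (max 0 (-tt) - s*(uu-tt))^2 := by
    have h := sq_max_shift' (-tt) (-(s*(uu-tt)))
    have h2 : -tt + -(s*(uu-tt)) = -(tt + s*(uu-tt)) := by ring
    rw [h2] at h
    calc (max 0 (-(tt + s*(uu-tt))))^2 ≤ (max 0 (-tt) + -(s*(uu-tt)))^2 := h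
      _ = (max 0 (-tt) - s*(uu-tt))^2 := by ring
  have e2 : (max 0 (tt + s*(uu-tt)))^2 ≤ (max 0 tt + s*(uu-tt))^2 := sq_max_shift' tt _
  have mt : max 0 tt * tt = (max 0 tt)^2 := max_mul_self' tt
  have mmt : max 0 (-tt) * (-tt) = (max 0 (-tt))^2 := max_mul_self' (-tt)
  have step : (1/2) * (cm * (max 0 (-(tt + s*(uu - tt))))^2 + cp * (max 0 (tt + s*(uu - tt)))^2)
      ≤ (1/2) * (cm * (max 0 (-tt) - s*(uu-tt))^2 + cp * (max 0 tt + s*(uu-tt))^2) := by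
    have := mul_le_mul_of_nonneg_left e1 hcm
    have := mul_le_mul_of_nonneg_left e2 hcp
    linarith
  refine step.trans (le_of_eq ?_)
  linear_combination (-(s*cm)) * mmt + (-(s*cp)) * mt

/-- If d_N = δ_N(λ(x),x) ≠ 0 for an optimal λ(x), then d_N is a multiobjective
reduced descent direction: U_N(x) d_N < 0 componentwise and the sign conditions on
active bounds hold. -/
theorem stmt13 (p r : ℕ) (U : Matrix (Fin r) (Fin p) ℝ)
    (φ : ℝ → ℝ) (hφ : ∀ t, 0 ≤ φ t) (hφ0 : ∀ t, φ t = 0 ↔ t = 0)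
    (a b x : Fin p → ℝ) (hax : ∀ i, a i ≤ x i) (hxb : ∀ i, x i ≤ b i)
    (hab : ∀ i, a i < b i)
    (l0 : Fin r → ℝ) (hl0 : l0 ∈ simplexSet r)
    (hopt : ∀ l ∈ simplexSet r, fObj U φ a b x l0 ≤ fObj U φ a b x l)
    (hdne : deltaN U φ a b x l0 ≠ 0) :
    (∀ j, U.mulVec (deltaN U φ a b x l0) j < 0) ∧
    (∀ i, x i = a i → 0 ≤ deltaN U φ a b x l0 i) ∧
    (∀ i, x i = b i → deltaN U φ a b x l0 i ≤ 0) := by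
  set d := deltaN U φ a b x l0 with hd
  set t : Fin p → ℝ := U.transpose.mulVec l0 with ht
  set f0 : ℝ := fObj U φ a b x l0 with hf0def
  -- positivity of f0
  have hterm_nonneg : ∀ i : Fin p, 0 ≤ φ (b i - x i) * (max 0 (-(t i)))^2
      + φ (x i - a i) * (max 0 (t i))^2 := by
    intro i
    have := hφ (b i - x i); have := hφ (x i - a i)
    positivity
  have hf0nonneg : 0 ≤ f0 := by
    rw [hf0def]; unfold fObj
    have : (0:ℝ) ≤ ∑ i, (φ (b i - x i) * (max 0 (-(U.transpose.mulVec l0 i)))^2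
        + φ (x i - a i) * (max 0 (U.transpose.mulVec l0 i))^2) :=
      Finset.sum_nonneg fun i _ => hterm_nonneg i
    linarith
  have hf0pos : 0 < f0 := by
    rcases lt_or_eq_of_le hf0nonneg with h | h
    · exact h
    exfalso; apply hdne
    have hsum0 : ∑ i, (φ (b i - x i) * (max 0 (-(t i)))^2
        + φ (x i - a i) * (max 0 (t i))^2) = 0 := by
      rw [hf0def] at h; unfold fObj at h
      linarith [h]
    funext i
    have hterm0 : φ (b i - x i) * (max 0 (-(t i)))^2
        + φ (x i - a i) * (max 0 (t i))^2 = 0 :=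
      (Finset.sum_eq_zero_iff_of_nonneg (fun i _ => hterm_nonneg i)).mp hsum0 i (Finset.mem_univ i)
    have h1 : φ (b i - x i) * (max 0 (-(t i)))^2 = 0 := by
      have := hφ (b i - x i); have := hφ (x i - a i)
      nlinarith [sq_nonneg (max 0 (-(t i))), sq_nonneg (max 0 (t i)),
        mul_nonneg (hφ (b i - x i)) (sq_nonneg (max 0 (-(t i)))),
        mul_nonneg (hφ (x i - a i)) (sq_nonneg (max 0 (t i)))]
    have h2 : φ (x i - a i) * (max 0 (t i))^2 = 0 := by linarith [hterm0, h1]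
    have g1 : φ (b i - x i) * max 0 (-(t i)) = 0 := by
      rcases mul_eq_zero.mp h1 with hc | hm
      · rw [hc]; ring
      · rw [pow_eq_zero_iff (two_ne_zero)] at hm; rw [hm]; ring
    have g2 : φ (x i - a i) * max 0 (t i) = 0 := by
      rcases mul_eq_zero.mp h2 with hc | hm
      · rw [hc]; ring
      · rw [pow_eq_zero_iff (two_ne_zero)] at hm; rw [hm]; ring
    show d i = 0
    rw [hd]; unfold deltaN
    simp only [← ht]
    rw [g1, g2]; ring
  -- the key descent inequality
  have hkey : ∀ j : Fin r, U.mulVec d j + 2 * f0 ≤ 0 := by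
    intro j
    set C : ℝ := ∑ i, (1/2) * (φ (b i - x i) + φ (x i - a i)) * (U j i - t i)^2 with hC
    have hCnonneg : 0 ≤ C := by
      apply Finset.sum_nonneg; intro i _
      have := hφ (b i - x i); have := hφ (x i - a i)
      positivity
    set A : ℝ := U.mulVec d j + 2 * f0 with hA
    have hstep : ∀ s : ℝ, 0 < s → s ≤ 1 → A ≤ s * C := by
      intro s hs0 hs1
      set l : Fin r → ℝ := fun k => (1-s) * l0 k + s * (if k = j then 1 else 0) with hl
      have hlmem : l ∈ simplexSet r := by
        constructor
        · intro k
          have h0 := hl0.1 k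
          have h1s : (0:ℝ) ≤ 1 - s := by linarith
          by_cases hk : k = j <;> simp only [hl, hk, if_pos, if_neg, ite_true, ite_false] <;>
            nlinarith [mul_nonneg h1s (hl0.1 j), mul_nonneg h1s (hl0.1 k)]
        · have : ∑ k, l k = (1-s) * ∑ k, l0 k + s * ∑ k, (if k = j then (1:ℝ) else 0) := by
            rw [Finset.mul_sum, Finset.mul_sum, ← Finset.sum_add_distrib]
          rw [this, hl0.2, Finset.sum_ite_eq' Finset.univ j (fun _ => (1:ℝ))]
          simp
      have hUl : ∀ i, U.transpose.mulVec l i = t i + s * (U j i - t i) := by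
        intro i
        have : U.transpose.mulVec l i
            = ∑ k, U k i * ((1-s) * l0 k + s * (if k = j then 1 else 0)) := by
          simp [Matrix.mulVec, dotProduct, Matrix.transpose_apply, hl]
        rw [this]
        have expand : ∀ k : Fin r, U k i * ((1-s) * l0 k + s * (if k = j then (1:ℝ) else 0))
            = (1-s) * (U k i * l0 k) + s * (if k = j then U k i else 0) := by
          intro k; by_cases hk : k = j <;> simp [hk] <;> ring
        rw [Finset.sum_congr rfl (fun k _ => expand k), Finset.sum_add_distrib,
          ← Finset.mul_sum, ← Finset.mul_sum,
          Finset.sum_ite_eq' Finset.univ j (fun k => U k i)]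
        have htι : t i = ∑ k, U k i * l0 k := by
          simp [ht, Matrix.mulVec, dotProduct, Matrix.transpose_apply]
        simp [← htι]
        ring
      -- main estimate
      have hmain : fObj U φ a b x l ≤ f0 - s * A + s^2 * C := by
        have hle : fObj U φ a b x l ≤ ∑ i,
            ((1/2) * (φ (b i - x i) * (max 0 (-(t i)))^2 + φ (x i - a i) * (max 0 (t i))^2)
            - s * (U j i * (φ (b i - x i) * max 0 (-(t i)) - φ (x i - a i) * max 0 (t i)))
            - s * (φ (b i - x i) * (max 0 (-(t i)))^2 + φ (x i - a i) * (max 0 (t i))^2)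
            + s^2 * ((1/2) * (φ (b i - x i) + φ (x i - a i)) * (U j i - t i)^2)) := by
          unfold fObj
          rw [Finset.mul_sum]
          apply Finset.sum_le_sum
          intro i _
          rw [hUl i]
          exact comp_bound' (φ (b i - x i)) (φ (x i - a i)) (t i) (U j i) s
            (hφ _) (hφ _)
        refine hle.trans (le_of_eq ?_)
        rw [Finset.sum_add_distrib, Finset.sum_sub_distrib, Finset.sum_sub_distrib,
          ← Finset.mul_sum, ← Finset.mul_sum, ← Finset.mul_sum, ← Finset.mul_sum]
        have hUd : U.mulVec d j = ∑ i, U j i * d i := by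
          simp [Matrix.mulVec, dotProduct]
        have hdi : ∀ i, d i = φ (b i - x i) * max 0 (-(t i)) - φ (x i - a i) * max 0 (t i) := by
          intro i; rw [hd]; unfold deltaN; simp [← ht]
        have hf0' : f0 = (1/2) * ∑ i, (φ (b i - x i) * (max 0 (-(t i)))^2
            + φ (x i - a i) * (max 0 (t i))^2) := by
          rw [hf0def]; unfold fObj; rfl
        rw [hA, hUd, hC, hf0']
        have : ∑ i, U j i * d i = ∑ i, U j i *
            (φ (b i - x i) * max 0 (-(t i)) - φ (x i - a i) * max 0 (t i)) := by
          apply Finset.sum_congr rfl; intro i _; rw [hdi i]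
        rw [this]
        ring
      have hfl := hopt l hlmem
      have : s * A ≤ s^2 * C := by linarith
      have hs2 : s^2 = s * s := sq s
      rw [hs2] at this
      have this2 : s * A ≤ s * (s * C) := by linarith [this]
      exact (mul_le_mul_iff_right₀ hs0).mp this2

    -- conclude A ≤ 0
    by_contra hApos
    push_neg at hApos
    set s0 : ℝ := min 1 (A / (2 * (C + 1))) with hs0def
    have hCpos : 0 < C + 1 := by linarith
    have hs0pos : 0 < s0 := lt_min one_pos (by positivity)
    have hs0le1 : s0 ≤ 1 := min_le_left _ _
    have hs0le : s0 ≤ A / (2 * (C + 1)) := min_le_right _ _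
    have hA' := hstep s0 hs0pos hs0le1
    have h1 : s0 * C ≤ s0 * (C + 1) := by nlinarith
    have h2 : s0 * (C + 1) ≤ (A / (2 * (C + 1))) * (C + 1) :=
      mul_le_mul_of_nonneg_right hs0le (le_of_lt hCpos)
    have h3 : (A / (2 * (C + 1))) * (C + 1) = A / 2 := by field_simp
    linarith
  -- finish
  refine ⟨fun j => by have := hkey j; linarith, ?_, ?_⟩
  · intro i hxa
    have hz : φ (x i - a i) = 0 := by rw [hφ0]; rw [hxa]; ring
    rw [hd]; unfold deltaN
    simp only [← ht]
    rw [hz]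
    have := hφ (b i - x i)
    have := le_max_left (0:ℝ) (-(t i))
    nlinarith [mul_nonneg (hφ (b i - x i)) (le_max_left (0:ℝ) (-(t i)))]
  · intro i hxb'
    have hz : φ (b i - x i) = 0 := by rw [hφ0]; rw [hxb']; ring
    rw [hd]; unfold deltaN
    simp only [← ht]
    rw [hz]
    nlinarith [mul_nonneg (hφ (x i - a i)) (le_max_left (0:ℝ) (t i))]
end

section
/- With notation as in the direction-finding subproblem: if d_N = δ_N(λ(x),x) = 0, then x is Pareto KKT-stationary, i.e., there exist (λ*,u*,v*,w*) ∈ (ℝʳ₊∖{0}) × ℝᵐ × ℝⁿ₊ × ℝⁿ₊ with JF(x)ᵀλ* + JG(x)ᵀu* − v* + w* = 0, v*·(x−a)=0, w*·(b−x)=0. Specifically one can take λ* = λ(x), u* = −(A_B(x)⁻¹)ᵀ JF_B(x)ᵀ λ*, v* = (0, (⌊(U_N(x)ᵀλ*)ᵢ⌋₊)_{i∈N}) and w* = (0, (⌊(U_N(x)ᵀλ*)ᵢ⌋₋)_{i∈N}). -/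
open Matrix

/-- If d_N = δ_N(λ(x),x) = 0 at a nondegenerate point with invertible basic block,
then x is Pareto KKT-stationary. -/
theorem stmt14 (m p r : ℕ)
    (JG : Matrix (Fin m) (Fin m ⊕ Fin p) ℝ)
    (JF : Matrix (Fin r) (Fin m ⊕ Fin p) ℝ)
    (hinv : IsUnit (JG.submatrix id Sum.inl).det)
    (a b x : Fin m ⊕ Fin p → ℝ)
    (hax : ∀ i, a i ≤ x i) (hxb : ∀ i, x i ≤ b i)
    (hnd : ∀ i : Fin m, a (Sum.inl i) < x (Sum.inl i) ∧ x (Sum.inl i) < b (Sum.inl i))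
    (φ : ℝ → ℝ) (hφ : ∀ t, 0 ≤ φ t) (hφ0 : ∀ t, φ t = 0 ↔ t = 0)
    (U : Matrix (Fin r) (Fin p) ℝ)
    (hU : U = JF.submatrix id Sum.inr -
      JF.submatrix id Sum.inl * (JG.submatrix id Sum.inl)⁻¹ * JG.submatrix id Sum.inr)
    (l0 : Fin r → ℝ) (hl0 : l0 ∈ simplexSet r)
    (hdzero : ∀ i : Fin p,
      φ (b (Sum.inr i) - x (Sum.inr i)) * max 0 (-(U.transpose.mulVec l0 i))
      - φ (x (Sum.inr i) - a (Sum.inr i)) * max 0 (U.transpose.mulVec l0 i) = 0) :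
    ∃ (l : Fin r → ℝ) (u : Fin m → ℝ) (v w : Fin m ⊕ Fin p → ℝ),
      (∀ j, 0 ≤ l j) ∧ l ≠ 0 ∧ (∀ i, 0 ≤ v i) ∧ (∀ i, 0 ≤ w i) ∧
      JF.transpose.mulVec l + JG.transpose.mulVec u - v + w = 0 ∧
      v ⬝ᵥ (x - a) = 0 ∧ w ⬝ᵥ (b - x) = 0 := by
  classical
  set A := JG.submatrix id Sum.inl with hA
  set s : Fin m → ℝ := (JF.submatrix id Sum.inl).transpose.mulVec l0 with hs
  set u : Fin m → ℝ := -(A⁻¹.transpose.mulVec s) with hu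
  set t : Fin p → ℝ := U.transpose.mulVec l0 with htdef
  refine ⟨l0, u, Sum.elim 0 (fun i => max 0 (t i)), Sum.elim 0 (fun i => max 0 (-t i)),
    hl0.1, ?_, ?_, ?_, ?_, ?_, ?_⟩
  · intro h
    have h2 := hl0.2
    rw [h] at h2
    simp at h2
  · rintro (i | i) <;> simp
  · rintro (i | i) <;> simp
  · -- stationarity
    have hAinv : A⁻¹ * A = 1 := Matrix.nonsing_inv_mul A hinv
    funext k
    cases k with
    | inl j =>
      have h1 : JG.transpose.mulVec u (Sum.inl j) = A.transpose.mulVec u j := by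
        simp [hA, Matrix.mulVec, Matrix.transpose_apply, Matrix.submatrix_apply, dotProduct]
      have h2 : A.transpose.mulVec u = -s := by
        rw [hu, Matrix.mulVec_neg, Matrix.mulVec_mulVec, ← Matrix.transpose_mul, hAinv,
          Matrix.transpose_one, Matrix.one_mulVec]
      have h3 : JF.transpose.mulVec l0 (Sum.inl j) = s j := by
        simp [hs, Matrix.mulVec, Matrix.transpose_apply, Matrix.submatrix_apply, dotProduct]
      have h2' := congrFun h2 j
      simp only [Pi.add_apply, Pi.sub_apply, Pi.zero_apply, Sum.elim_inl, h1, h2', h3,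
        Pi.neg_apply]
      ring
    | inr i =>
      have h1 : JG.transpose.mulVec u (Sum.inr i)
          = (JG.submatrix id Sum.inr).transpose.mulVec u i := by
        simp [Matrix.mulVec, Matrix.transpose_apply, Matrix.submatrix_apply, dotProduct]
      have h2 : (JG.submatrix id Sum.inr).transpose.mulVec u
          = -(((JF.submatrix id Sum.inl) * A⁻¹ * JG.submatrix id Sum.inr).transpose.mulVec l0) := by
        rw [hu, Matrix.mulVec_neg, Matrix.mulVec_mulVec, hs, Matrix.mulVec_mulVec]
        congr 1
        simp [Matrix.transpose_mul, Matrix.mul_assoc]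
      have h3 : JF.transpose.mulVec l0 (Sum.inr i)
          = (JF.submatrix id Sum.inr).transpose.mulVec l0 i := by
        simp [Matrix.mulVec, Matrix.transpose_apply, Matrix.submatrix_apply, dotProduct]
      have h4 : t i = (JF.submatrix id Sum.inr).transpose.mulVec l0 i
          - ((JF.submatrix id Sum.inl) * A⁻¹ * JG.submatrix id Sum.inr).transpose.mulVec l0 i := by
        rw [htdef, hU]
        rw [Matrix.transpose_sub, Matrix.sub_mulVec]
        simp [hA]
      have h2' := congrFun h2 i
      simp only [Pi.add_apply, Pi.sub_apply, Pi.zero_apply, Sum.elim_inr, h1, h2', h3,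
        Pi.neg_apply]
      rcases le_total 0 (t i) with h | h
      · rw [max_eq_right h, max_eq_left (by linarith)]
        rw [h4] at *
        ring
      · rw [max_eq_left h, max_eq_right (by linarith)]
        rw [h4] at *
        ring
  · rw [dotProduct, Fintype.sum_sum_type]
    simp only [Sum.elim_inl, Sum.elim_inr, Pi.zero_apply, zero_mul, Finset.sum_const_zero,
      zero_add, Pi.sub_apply]
    apply Finset.sum_eq_zero
    intro i _
    rcases le_or_gt (t i) 0 with h | h
    · rw [max_eq_left h, zero_mul]
    · have hmn : max 0 (-(t i)) = 0 := max_eq_left (by linarith)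
      have hd := hdzero i
      rw [hmn, mul_zero, max_eq_right h.le, zero_sub, neg_eq_zero] at hd
      have hφz : φ (x (Sum.inr i) - a (Sum.inr i)) = 0 := by
        rcases mul_eq_zero.mp hd with h' | h'
        · exact h'
        · exact absurd h' (ne_of_gt h)
      have hxa : x (Sum.inr i) - a (Sum.inr i) = 0 := (hφ0 _).mp hφz
      rw [max_eq_right h.le, hxa, mul_zero]
  · rw [dotProduct, Fintype.sum_sum_type]
    simp only [Sum.elim_inl, Sum.elim_inr, Pi.zero_apply, zero_mul, Finset.sum_const_zero,
      zero_add, Pi.sub_apply]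
    apply Finset.sum_eq_zero
    intro i _
    rcases le_or_gt 0 (t i) with h | h
    · rw [max_eq_left (by linarith), zero_mul]
    · have hmp : max 0 (t i) = 0 := max_eq_left h.le
      have hd := hdzero i
      rw [hmp, mul_zero, max_eq_right (by linarith : (0:ℝ) ≤ -t i), sub_zero] at hd
      have hφz : φ (b (Sum.inr i) - x (Sum.inr i)) = 0 := by
        rcases mul_eq_zero.mp hd with h' | h'
        · exact h'
        · exact absurd h' (by simp; linarith)
      have hbx : b (Sum.inr i) - x (Sum.inr i) = 0 := (hφ0 _).mp hφz
      rw [max_eq_right (by linarith : (0:ℝ) ≤ -t i), hbx, mul_zero]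
end
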